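/- General prior Sanov's Theorem for Sources: Let π be a prior pmf on the set R of rational pmfs with finite support S = {q ∈ R : π(q) > 0}, and for each n let a quantization of R be given with induced prior π^A_n on R_n; assume the mesh of the quantizations tends to 0 (i.e., the supremum over cells of the total-variation diameter of a cell tends to 0 as n → ∞). Let p ∈ P(X) have full support (p(x) > 0 for all x), and let ν_n ∈ R_n with d(ν_n, p) → 0. Let Q ⊆ P(X) be open with Q∩S ≠ ∅, cl(Q)∩S = Q∩S, and suppose some element of Q∩S has full support. Then lim_{n→∞} (1/n)·log π^A_n(Q|ν_n) = L(Q∩S‖p) − L(S‖p). -/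

import Mathlib

open scoped BigOperators Classical
open Filter Topology

noncomputable section

def pmfSet (X : Type*) [Fintype X] : Set (X → ℝ) :=
  {p | (∀ x, 0 ≤ p x) ∧ ∑ x, p x = 1}

def Rn (X : Type*) [Fintype X] (n : ℕ) : Set (X → ℝ) :=
  {q | q ∈ pmfSet X ∧ ∀ x, ∃ k : ℕ, q x = (k : ℝ) / (n : ℝ)}

def ratPMF (X : Type*) [Fintype X] : Set (X → ℝ) :=
  {q | q ∈ pmfSet X ∧ ∀ x, ∃ r : ℚ, q x = (r : ℝ)}

def Ldiv {X : Type*} [Fintype X] (q p : X → ℝ) : EReal :=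
  ∑ x, if p x = 0 then (0 : EReal)
    else if q x = 0 then (⊥ : EReal)
    else (↑(p x * Real.log (q x)) : EReal)

def LSup {X : Type*} [Fintype X] (Q : Set (X → ℝ)) (p : X → ℝ) : EReal :=
  ⨆ q ∈ Q, Ldiv q p

def Idiv {X : Type*} [Fintype X] (p q : X → ℝ) : EReal :=
  ∑ x, if p x = 0 then (0 : EReal)
    else if q x = 0 then (⊤ : EReal)
    else (↑(p x * Real.log (p x / q x)) : EReal)

def typeProb {X : Type*} [Fintype X] (n : ℕ) (ν q : X → ℝ) : ℝ :=
  ∏ x, q x ^ ((n : ℝ) * ν x)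

def post {X : Type*} [Fintype X] (n : ℕ) (ν : X → ℝ) (Q : Set (X → ℝ)) : ℝ :=
  (∑' q : ↥(Q ∩ Rn X n), typeProb n ν ↑q) / (∑' q : ↥(Rn X n), typeProb n ν ↑q)

def postGen {X : Type*} [Fintype X] (w : (X → ℝ) → ℝ) (n : ℕ) (ν : X → ℝ)
    (Q : Set (X → ℝ)) : ℝ :=
  (∑' q : ↥(Q ∩ Rn X n), w ↑q * typeProb n ν ↑q) /
  (∑' q : ↥(Rn X n), w ↑q * typeProb n ν ↑q)

def tv {X : Type*} [Fintype X] (p q : X → ℝ) : ℝ := (1 / 2) * ∑ x, |p x - q x|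

def tvBall {X : Type*} [Fintype X] (q : X → ℝ) (ε : ℝ) : Set (X → ℝ) :=
  {p | p ∈ pmfSet X ∧ tv p q ≤ ε}

def elog (x : ℝ) : EReal := if x ≤ 0 then (⊥ : EReal) else (↑(Real.log x) : EReal)

def linFam {X : Type*} [Fintype X] {k : ℕ} (u : Fin k → X → ℝ) (a : Fin k → ℝ) :
    Set (X → ℝ) :=
  {q | q ∈ pmfSet X ∧ ∀ j, ∑ x, q x * u j x = a j}

def lambdaN {X : Type*} [Fintype X] (w : (X → ℝ) → ℝ) (n : ℕ) (ν : X → ℝ)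
    (C : Set (X → ℝ)) : EReal :=
  ⨆ q ∈ C ∩ {q | q ∈ Rn X n ∧ 0 < w q},
    (Ldiv q ν + (↑((1 : ℝ) / n * Real.log (w q)) : EReal))

def priorN {X : Type*} [Fintype X] (c : ℕ → (X → ℝ) → (X → ℝ)) (pr : (X → ℝ) → ℝ)
    (n : ℕ) (qn : X → ℝ) : ℝ :=
  ∑' q : ↥{q | q ∈ ratPMF X ∧ c n q = qn}, pr ↑q

section Aux

variable {X : Type*} [Fintype X]

lemma ereal_coe_finset_sum {ι : Type*} (s : Finset ι) (f : ι → ℝ) :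
    ((∑ i ∈ s, f i : ℝ) : EReal) = ∑ i ∈ s, (f i : EReal) := by
  induction s using Finset.cons_induction with
  | empty => simp
  | cons a s ha ih => rw [Finset.sum_cons, Finset.sum_cons, EReal.coe_add, ih]

lemma pmf_coord_le_one {q : X → ℝ} (hq : q ∈ pmfSet X) (x : X) : q x ≤ 1 := by
  have h := Finset.single_le_sum (f := q) (fun i _ => hq.1 i) (Finset.mem_univ x)
  rw [hq.2] at h; exact h

lemma Rn_subset_pmfSet (n : ℕ) : Rn X n ⊆ pmfSet X := fun _ hq => hq.1

lemma Rn_subset_ratPMF {n : ℕ} (hn : 1 ≤ n) : Rn X n ⊆ ratPMF X := by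
  intro q hq
  refine ⟨hq.1, fun x => ?_⟩
  obtain ⟨k, hk⟩ := hq.2 x
  exact ⟨(k : ℚ) / (n : ℚ), by rw [hk]; push_cast; ring⟩

lemma coord_le_two_tv (a b : X → ℝ) (x : X) : |a x - b x| ≤ 2 * tv a b := by
  have h := Finset.single_le_sum (f := fun x => |a x - b x|)
    (fun i _ => abs_nonneg _) (Finset.mem_univ x)
  unfold tv; linarith

lemma Ldiv_full {q : X → ℝ} (p : X → ℝ) (hpfull : ∀ x, 0 < p x) (hq : ∀ x, 0 < q x) :
    Ldiv q p = ((∑ x, p x * Real.log (q x) : ℝ) : EReal) := by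
  rw [Ldiv, ereal_coe_finset_sum]
  exact Finset.sum_congr rfl fun x _ => by
    rw [if_neg (ne_of_gt (hpfull x)), if_neg (ne_of_gt (hq x))]

lemma Ldiv_bot {q : X → ℝ} (p : X → ℝ) (hpfull : ∀ x, 0 < p x) {x0 : X} (hx0 : q x0 = 0) :
    Ldiv q p = ⊥ := by
  rw [Ldiv, ← Finset.add_sum_erase _ _ (Finset.mem_univ x0),
    if_neg (ne_of_gt (hpfull x0)), if_pos hx0, EReal.bot_add]

set_option maxHeartbeats 2000000 in
lemma LSup_finset (F : Finset (X → ℝ)) (p : X → ℝ) (hpfull : ∀ x, 0 < p x)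
    (hF0 : ∀ q ∈ F, ∀ x, 0 ≤ q x)
    (hne : (F.filter (fun q => ∀ x, 0 < q x)).Nonempty) :
    LSup (↑F) p = (((F.filter (fun q => ∀ x, 0 < q x)).sup' hne
      (fun q => ∑ x, p x * Real.log (q x)) : ℝ) : EReal) := by
  rw [LSup]
  apply le_antisymm
  · refine iSup₂_le fun q hq => ?_
    rw [Finset.mem_coe] at hq
    by_cases hfull : ∀ x, 0 < q x
    · rw [Ldiv_full p hpfull hfull]
      exact EReal.coe_le_coe_iff.2
        (Finset.le_sup' (fun q => ∑ x, p x * Real.log (q x)) (Finset.mem_filter.2 ⟨hq, hfull⟩))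
    · push_neg at hfull
      obtain ⟨x0, hx0⟩ := hfull
      rw [Ldiv_bot p hpfull (le_antisymm hx0 (hF0 q hq x0))]
      exact bot_le
  · obtain ⟨qs, hqsmem, hqs⟩ := Finset.exists_mem_eq_sup' hne (fun q => ∑ x, p x * Real.log (q x))
    rw [hqs]
    rw [Finset.mem_filter] at hqsmem
    rw [← Ldiv_full p hpfull hqsmem.2]
    exact le_iSup₂_of_le qs (Finset.mem_coe.2 hqsmem.1) le_rfl

set_option maxHeartbeats 2000000 in
lemma sum_exp_limit (p : X → ℝ) (hpfull : ∀ x, 0 < p x)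
    (ν : ℕ → X → ℝ) (hν0 : ∀ n, 1 ≤ n → ∀ x, 0 ≤ ν n x)
    (hνconv : ∀ x, Tendsto (fun n => ν n x) atTop (𝓝 (p x)))
    (pr : (X → ℝ) → ℝ) (T : Finset (X → ℝ))
    (hTpos : ∀ q ∈ T, 0 < pr q)
    (b : ℕ → (X → ℝ) → X → ℝ)
    (hb01 : ∀ n, 1 ≤ n → ∀ q ∈ T, ∀ x, 0 ≤ b n q x ∧ b n q x ≤ 1)
    (hbconv : ∀ q ∈ T, ∀ x, Tendsto (fun n => b n q x) atTop (𝓝 (q x)))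
    (hne : (T.filter (fun q => ∀ x, 0 < q x)).Nonempty) :
    Tendsto
      (fun n : ℕ => (1 / (n : ℝ)) * Real.log (∑ q ∈ T, pr q * typeProb n (ν n) (b n q)))
      atTop
      (𝓝 ((T.filter (fun q => ∀ x, 0 < q x)).sup' hne
        (fun q => ∑ x, p x * Real.log (q x)))) := by
  set Λ : (X → ℝ) → ℝ := fun q => ∑ x, p x * Real.log (q x) with hΛ
  set M : ℝ := (T.filter (fun q => ∀ x, 0 < q x)).sup' hne Λ with hM
  -- per-term convergence for full-support members
  have hterm : ∀ q ∈ T, (∀ x, 0 < q x) →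
      Tendsto (fun n : ℕ => (1 / (n:ℝ)) * Real.log (pr q * typeProb n (ν n) (b n q)))
        atTop (𝓝 (Λ q)) := by
    intro q hqT hqfull
    have hbpos : ∀ᶠ n in atTop, ∀ x, 0 < b n q x :=
      eventually_all.2 fun x => (hbconv q hqT x).eventually (eventually_gt_nhds (hqfull x))
    have hlim : Tendsto
        (fun n : ℕ => (1/(n:ℝ)) * Real.log (pr q) + ∑ x, ν n x * Real.log (b n q x))
        atTop (𝓝 (0 + Λ q)) := by
      refine Filter.Tendsto.add ?_ ?_
      · have h := tendsto_one_div_atTop_nhds_zero_nat.mul_const (Real.log (pr q))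
        simpa using h
      · refine tendsto_finset_sum _ fun x _ => (hνconv x).mul ?_
        exact ((Real.continuousAt_log (ne_of_gt (hqfull x))).tendsto).comp (hbconv q hqT x)
    rw [zero_add] at hlim
    refine Filter.Tendsto.congr' ?_ hlim
    filter_upwards [hbpos, Filter.eventually_ge_atTop 1] with n hb1 hn1
    have hn0 : (n : ℝ) ≠ 0 := Nat.cast_ne_zero.2 (by omega)
    have hlog : Real.log (pr q * typeProb n (ν n) (b n q))
        = Real.log (pr q) + ∑ x, ((n:ℝ) * ν n x) * Real.log (b n q x) := by
      have hprod_pos : 0 < ∏ x, b n q x ^ ((n:ℝ) * ν n x) :=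
        Finset.prod_pos fun x _ => Real.rpow_pos_of_pos (hb1 x) _
      rw [typeProb, Real.log_mul (ne_of_gt (hTpos q hqT)) (ne_of_gt hprod_pos),
        Real.log_prod (fun x _ => ne_of_gt (Real.rpow_pos_of_pos (hb1 x) _))]
      congr 1
      exact Finset.sum_congr rfl fun x _ => Real.log_rpow (hb1 x) _
    rw [hlog, mul_add, Finset.mul_sum]
    congr 1
    refine Finset.sum_congr rfl fun x _ => ?_
    field_simp
      -- positivity infrastructure
  have hne' := hne
  obtain ⟨q1, hq1mem⟩ := hne'
  have hq1T : q1 ∈ T := (Finset.mem_filter.1 hq1mem).1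
  have hq1full : ∀ x, 0 < q1 x := (Finset.mem_filter.1 hq1mem).2
  have hqpos : ∀ q ∈ T, (∀ x, 0 < q x) →
      ∀ᶠ n in atTop, 0 < pr q * typeProb n (ν n) (b n q) := by
    intro q hqT hqfull
    have hb1 : ∀ᶠ n in atTop, ∀ x, 0 < b n q x :=
      eventually_all.2 fun x => (hbconv q hqT x).eventually (eventually_gt_nhds (hqfull x))
    filter_upwards [hb1] with n hb1
    exact mul_pos (hTpos q hqT)
      (Finset.prod_pos fun x _ => Real.rpow_pos_of_pos (hb1 x) _)
  have hanonneg : ∀ᶠ n in atTop, ∀ q ∈ T, 0 ≤ pr q * typeProb n (ν n) (b n q) := by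
    filter_upwards [Filter.eventually_ge_atTop 1] with n hn1 q hqT
    exact mul_nonneg (le_of_lt (hTpos q hqT))
      (Finset.prod_nonneg fun x _ => Real.rpow_nonneg ((hb01 n hn1 q hqT x).1) _)
  have hsumpos : ∀ᶠ n in atTop, 0 < ∑ q ∈ T, pr q * typeProb n (ν n) (b n q) := by
    filter_upwards [hqpos q1 hq1T hq1full, hanonneg] with n h1 h2
    exact Finset.sum_pos' h2 ⟨q1, hq1T, h1⟩
  rw [tendsto_order]
  constructor
  · intro bnd hbnd
    obtain ⟨qs, hqsmem, hqs⟩ := Finset.exists_mem_eq_sup' hne Λ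
    have hqsT : qs ∈ T := (Finset.mem_filter.1 hqsmem).1
    have hqsfull : ∀ x, 0 < qs x := (Finset.mem_filter.1 hqsmem).2
    have hts := hterm qs hqsT hqsfull
    have hev := (tendsto_order.1 hts).1 bnd (by rw [← hqs]; exact hbnd)
    filter_upwards [hev, hqpos qs hqsT hqsfull, hanonneg, hsumpos] with n h1 h2 h3 _
    calc bnd < (1/(n:ℝ)) * Real.log (pr qs * typeProb n (ν n) (b n qs)) := h1
      _ ≤ (1/(n:ℝ)) * Real.log (∑ q ∈ T, pr q * typeProb n (ν n) (b n q)) := by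
        refine mul_le_mul_of_nonneg_left ?_ (by positivity)
        exact Real.log_le_log h2 (Finset.single_le_sum h3 hqsT)
  · intro bnd hbnd
    set ε : ℝ := (bnd - M)/2 with hε
    have hεpos : 0 < ε := by rw [hε]; linarith
    have hub : ∀ q ∈ T, ∀ᶠ n in atTop,
        pr q * typeProb n (ν n) (b n q) ≤ Real.exp ((n:ℝ) * (M + ε)) := by
      intro q hqT
      by_cases hfull : ∀ x, 0 < q x
      · have hΛle : Λ q ≤ M := Finset.le_sup' Λ (Finset.mem_filter.2 ⟨hqT, hfull⟩)
        have hev := (tendsto_order.1 (hterm q hqT hfull)).2 (M + ε)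
          (lt_of_le_of_lt hΛle (by linarith))
        filter_upwards [hev, hqpos q hqT hfull, Filter.eventually_ge_atTop 1]
          with n h1 h2 hn1
        have hnpos : (0:ℝ) < n := Nat.cast_pos.2 (by omega)
        rw [← Real.log_le_iff_le_exp h2]
        have h3 := mul_le_mul_of_nonneg_left (le_of_lt h1) (le_of_lt hnpos)
        rw [← mul_assoc, mul_one_div, div_self (ne_of_gt hnpos), one_mul] at h3
        exact h3
      · push_neg at hfull
        obtain ⟨x0, hx0⟩ := hfull
        have hq0le : 0 ≤ q x0 := by
          refine ge_of_tendsto (hbconv q hqT x0) ?_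
          filter_upwards [Filter.eventually_ge_atTop 1] with n hn1
          exact (hb01 n hn1 q hqT x0).1
        have hq0 : q x0 = 0 := le_antisymm hx0 hq0le
        set K : ℝ := |Real.log (pr q)| + |M + ε| + 1 with hK
        have hKpos : 0 < K := by positivity
        have hpx0 := hpfull x0
        have hδpos : (0:ℝ) < Real.exp (-(2*K/p x0)) := Real.exp_pos _
        have hevb : ∀ᶠ n in atTop, b n q x0 < Real.exp (-(2*K/p x0)) :=
          (hbconv q hqT x0).eventually (by rw [hq0]; exact eventually_lt_nhds hδpos)
        have hevν : ∀ᶠ n in atTop, p x0 / 2 < ν n x0 :=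
          (hνconv x0).eventually (eventually_gt_nhds (by linarith))
        filter_upwards [hevb, hevν, Filter.eventually_ge_atTop 1] with n hbn hνn hn1
        have hn0 : (0:ℝ) < n := Nat.cast_pos.2 (by omega)
        have hb0 := (hb01 n hn1 q hqT x0).1
        have hνpos : 0 < ν n x0 := lt_of_le_of_lt (by linarith) hνn
        have htp : typeProb n (ν n) (b n q) ≤ b n q x0 ^ ((n:ℝ) * ν n x0) := by
          rw [typeProb, ← Finset.mul_prod_erase Finset.univ _ (Finset.mem_univ x0)]
          have h1 : ∏ x ∈ Finset.univ.erase x0, b n q x ^ ((n:ℝ) * ν n x) ≤ 1 :=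
            Finset.prod_le_one
              (fun x _ => Real.rpow_nonneg (hb01 n hn1 q hqT x).1 _)
              (fun x _ => Real.rpow_le_one (hb01 n hn1 q hqT x).1
                (hb01 n hn1 q hqT x).2 (mul_nonneg (le_of_lt hn0) (hν0 n hn1 x)))
          exact mul_le_of_le_one_right (Real.rpow_nonneg hb0 _) h1
        rcases eq_or_lt_of_le hb0 with hb0eq | hb0pos
        · have htp0 : typeProb n (ν n) (b n q) ≤ 0 := by
            rw [← hb0eq, Real.zero_rpow (ne_of_gt (mul_pos hn0 hνpos))] at htp
            exact htp
          have : pr q * typeProb n (ν n) (b n q) ≤ 0 :=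
            mul_nonpos_of_nonneg_of_nonpos (le_of_lt (hTpos q hqT)) htp0
          exact le_trans this (le_of_lt (Real.exp_pos _))
        · have hlogb : Real.log (b n q x0) ≤ -(2*K/p x0) := by
            rw [← Real.log_exp (-(2*K/p x0))]
            exact Real.log_le_log hb0pos (le_of_lt hbn)
          have step1 : ν n x0 * Real.log (b n q x0) ≤ (p x0/2) * (-(2*K/p x0)) := by
            calc ν n x0 * Real.log (b n q x0) ≤ ν n x0 * (-(2*K/p x0)) :=
                mul_le_mul_of_nonneg_left hlogb (le_of_lt hνpos)
              _ ≤ (p x0/2) * (-(2*K/p x0)) :=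
                mul_le_mul_of_nonpos_right (le_of_lt hνn)
                  (neg_nonpos.2 (by positivity))
          have step2 : (p x0/2) * (-(2*K/p x0)) = -K := by
            field_simp
          have hBpos : 0 < pr q * b n q x0 ^ ((n:ℝ)*ν n x0) :=
            mul_pos (hTpos q hqT) (Real.rpow_pos_of_pos hb0pos _)
          have hlogB : Real.log (pr q * b n q x0 ^ ((n:ℝ)*ν n x0)) ≤ (n:ℝ)*(M+ε) := by
            rw [Real.log_mul (ne_of_gt (hTpos q hqT))
              (ne_of_gt (Real.rpow_pos_of_pos hb0pos _)), Real.log_rpow hb0pos]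
            have h3 : (n:ℝ) * ν n x0 * Real.log (b n q x0) ≤ (n:ℝ) * (-K) := by
              rw [mul_assoc]
              exact mul_le_mul_of_nonneg_left (step1.trans_eq step2) (le_of_lt hn0)
            have h4 : Real.log (pr q) ≤ (n:ℝ) * |Real.log (pr q)| :=
              calc Real.log (pr q) ≤ |Real.log (pr q)| := le_abs_self _
                _ ≤ (n:ℝ) * |Real.log (pr q)| :=
                  le_mul_of_one_le_left (abs_nonneg _) (by exact_mod_cast hn1)
            have h5 : -(|M+ε|) - 1 ≤ M + ε := by linarith [neg_abs_le (M+ε)]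
            have h6 : (n:ℝ) * (-(|M+ε|) - 1) ≤ (n:ℝ) * (M + ε) :=
              mul_le_mul_of_nonneg_left h5 (le_of_lt hn0)
            have h7 : (n:ℝ) * (-(|M+ε|) - 1) = (n:ℝ) * |Real.log (pr q)| + (n:ℝ) * (-K) := by
              rw [hK]; ring
            linarith
          calc pr q * typeProb n (ν n) (b n q)
              ≤ pr q * b n q x0 ^ ((n:ℝ)*ν n x0) :=
                mul_le_mul_of_nonneg_left htp (le_of_lt (hTpos q hqT))
            _ ≤ Real.exp ((n:ℝ)*(M+ε)) := by
                rw [← Real.exp_log hBpos]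
                exact Real.exp_le_exp.2 hlogB
    have hall : ∀ᶠ n in atTop, ∀ q ∈ T,
        pr q * typeProb n (ν n) (b n q) ≤ Real.exp ((n:ℝ)*(M+ε)) :=
      (eventually_all_finset T).2 hub
    have hcard : ∀ᶠ n : ℕ in atTop, (1/(n:ℝ)) * Real.log (T.card) < ε := by
      have h := tendsto_one_div_atTop_nhds_zero_nat.mul_const (Real.log (T.card))
      rw [zero_mul] at h
      exact h.eventually (eventually_lt_nhds hεpos)
    filter_upwards [hall, hsumpos, hcard, Filter.eventually_ge_atTop 1]
      with n h1 h2 h3 hn1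
    have hn0 : (0:ℝ) < n := Nat.cast_pos.2 (by omega)
    have hcard1 : (1:ℝ) ≤ T.card := by
      exact_mod_cast Nat.one_le_iff_ne_zero.2 (Finset.card_ne_zero_of_mem hq1T)
    have hcardpos : (0:ℝ) < T.card := lt_of_lt_of_le zero_lt_one hcard1
    have hsumle : ∑ q ∈ T, pr q * typeProb n (ν n) (b n q)
        ≤ (T.card : ℝ) * Real.exp ((n:ℝ)*(M+ε)) := by
      have h := Finset.sum_le_card_nsmul T _ _ h1
      simpa [nsmul_eq_mul] using h
    have hlogle : Real.log (∑ q ∈ T, pr q * typeProb n (ν n) (b n q))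
        ≤ Real.log (T.card) + (n:ℝ)*(M+ε) := by
      rw [← Real.log_exp ((n:ℝ)*(M+ε)),
        ← Real.log_mul (ne_of_gt hcardpos) (ne_of_gt (Real.exp_pos _))]
      exact Real.log_le_log h2 hsumle
    calc (1/(n:ℝ)) * Real.log (∑ q ∈ T, pr q * typeProb n (ν n) (b n q))
        ≤ (1/(n:ℝ)) * (Real.log (T.card) + (n:ℝ)*(M+ε)) :=
          mul_le_mul_of_nonneg_left hlogle (by positivity)
      _ = (1/(n:ℝ)) * Real.log (T.card) + (M+ε) := by
          rw [mul_add]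
          congr 1
          field_simp
      _ < ε + (M + ε) := by linarith
      _ = bnd := by rw [hε]; ring

end Aux

set_option maxHeartbeats 2000000 in
/-- General prior Sanov's Theorem for Sources. -/
theorem general_prior_sanov_for_sources {X : Type*} [Fintype X] [Nonempty X]
    (pr : (X → ℝ) → ℝ) (S : Set (X → ℝ))
    (hS : S = {q | q ∈ ratPMF X ∧ 0 < pr q})
    (hSfin : S.Finite)
    (hpr0 : ∀ q, 0 ≤ pr q) (hprsupp : ∀ q, q ∉ ratPMF X → pr q = 0)
    (hpr1 : (∑' q : ↥S, pr ↑q) = 1)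
    (c : ℕ → (X → ℝ) → (X → ℝ))
    (hc1 : ∀ n, 1 ≤ n → ∀ q ∈ ratPMF X, c n q ∈ Rn X n)
    (hc2 : ∀ n, 1 ≤ n → ∀ q ∈ Rn X n, c n q = q)
    (hmesh : ∀ δ : ℝ, 0 < δ → ∃ N : ℕ, ∀ n ≥ N, ∀ q ∈ ratPMF X, ∀ q' ∈ ratPMF X,
      c n q = c n q' → tv q q' < δ)
    (p : X → ℝ) (hp : p ∈ pmfSet X) (hpfull : ∀ x, 0 < p x)
    (ν : ℕ → X → ℝ) (hν : ∀ n, 1 ≤ n → ν n ∈ Rn X n)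
    (hconv : Filter.Tendsto (fun n => tv (ν n) p) Filter.atTop (nhds 0))
    (Q : Set (X → ℝ)) (hQsub : Q ⊆ pmfSet X)
    (hQopen : IsOpen {r : ↥(pmfSet X) | ↑r ∈ Q})
    (hQS : (Q ∩ S).Nonempty)
    (hclQ : closure Q ∩ S = Q ∩ S)
    (hfull : ∃ q ∈ Q ∩ S, ∀ x, 0 < q x) :
    Filter.Tendsto
      (fun n : ℕ =>
        (↑((1 : ℝ) / (n : ℝ)) : EReal) * elog (postGen (priorN c pr n) n (ν n) Q))
      Filter.atTop (nhds (LSup (Q ∩ S) p - LSup S p)) := by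
  classical
  set F : Finset (X → ℝ) := hSfin.toFinset with hF
  have hFS : (↑F : Set (X → ℝ)) = S := hSfin.coe_toFinset
  have hmemF : ∀ q, q ∈ F ↔ q ∈ S := fun q => hSfin.mem_toFinset
  have hFrat : ∀ q ∈ F, q ∈ ratPMF X := by
    intro q hq
    have h := (hmemF q).1 hq
    rw [hS] at h
    exact h.1
  have hFpos : ∀ q ∈ F, 0 < pr q := by
    intro q hq
    have h := (hmemF q).1 hq
    rw [hS] at h
    exact h.2
  have hsupp : ∀ q, q ∉ S → pr q = 0 := by
    intro q hq
    by_cases hr : q ∈ ratPMF X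
    · by_contra h
      exact hq (by rw [hS]; exact ⟨hr, lt_of_le_of_ne (hpr0 q) (Ne.symm h)⟩)
    · exact hprsupp q hr
  -- coordinatewise convergence of ν to p
  have hν0 : ∀ n, 1 ≤ n → ∀ x, 0 ≤ ν n x := fun n hn x => (hν n hn).1.1 x
  have hνconv : ∀ x, Tendsto (fun n => ν n x) atTop (𝓝 (p x)) := by
    intro x
    rw [tendsto_iff_dist_tendsto_zero]
    refine squeeze_zero (g := fun n => 2 * tv (ν n) p) (fun n => dist_nonneg)
      (fun n => ?_) ?_
    · exact (Real.dist_eq _ _).trans_le (coord_le_two_tv (ν n) p x)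
    · have h := hconv.const_mul (2:ℝ)
      rw [mul_zero] at h
      exact h
  -- coordinatewise convergence of c n q to q
  have hcconv : ∀ q ∈ ratPMF X, ∀ x, Tendsto (fun n => c n q x) atTop (𝓝 (q x)) := by
    intro q hq x
    rw [Metric.tendsto_atTop]
    intro ε hε
    obtain ⟨N, hN⟩ := hmesh (ε/2) (by linarith)
    refine ⟨max N 1, fun n hn => ?_⟩
    have hn1 : 1 ≤ n := le_trans (le_max_right _ _) hn
    have hnN : N ≤ n := le_trans (le_max_left _ _) hn
    have hcq : c n q ∈ ratPMF X := Rn_subset_ratPMF hn1 (hc1 n hn1 q hq)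
    have htv : tv q (c n q) < ε/2 :=
      hN n hnN q hq (c n q) hcq (hc2 n hn1 (c n q) (hc1 n hn1 q hq)).symm
    have hcoord := coord_le_two_tv q (c n q) x
    rw [Real.dist_eq, abs_sub_comm]
    linarith
  -- priorN as a finite sum over F
  have hw : ∀ n qn, priorN c pr n qn = ∑ q ∈ F, if c n q = qn then pr q else 0 := by
    intro n qn
    rw [priorN, tsum_subtype]
    rw [tsum_eq_sum (s := F) ?_]
    · refine Finset.sum_congr rfl fun q hq => ?_
      rw [Set.indicator_apply]
      by_cases h : c n q = qn
      · rw [if_pos ⟨hFrat q hq, h⟩, if_pos h]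
      · rw [if_neg (fun hmem => h hmem.2), if_neg h]
    · intro q hq
      rw [Set.indicator_apply]
      split
      · exact hsupp q (fun hqS => hq ((hmemF q).2 hqS))
      · rfl
  -- denominator as a finite sum over F
  have hD : ∀ n, 1 ≤ n →
      (∑' q : ↥(Rn X n), priorN c pr n ↑q * typeProb n (ν n) ↑q)
        = ∑ q ∈ F, pr q * typeProb n (ν n) (c n q) := by
    intro n hn
    refine Eq.trans (tsum_subtype (Rn X n)
      (fun qn => priorN c pr n qn * typeProb n (ν n) qn)) ?_
    rw [tsum_eq_sum (s := F.image (c n)) ?_]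
    · have h1 : ∀ qn ∈ F.image (c n),
          (Rn X n).indicator (fun qn => priorN c pr n qn * typeProb n (ν n) qn) qn
            = priorN c pr n qn * typeProb n (ν n) qn := by
        intro qn hqn
        obtain ⟨q, hqF, rfl⟩ := Finset.mem_image.1 hqn
        exact Set.indicator_of_mem (hc1 n hn q (hFrat q hqF)) _
      rw [Finset.sum_congr rfl h1]
      have h2 : ∀ qn ∈ F.image (c n), priorN c pr n qn * typeProb n (ν n) qn
          = ∑ q ∈ F, if qn = c n q then pr q * typeProb n (ν n) qn else 0 := by
        intro qn _
        rw [hw n qn, Finset.sum_mul]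
        refine Finset.sum_congr rfl fun q _ => ?_
        by_cases h : c n q = qn
        · rw [if_pos h, if_pos h.symm]
        · rw [if_neg h, if_neg (fun h' => h h'.symm), zero_mul]
      rw [Finset.sum_congr rfl h2, Finset.sum_comm]
      refine Finset.sum_congr rfl fun q hq => ?_
      rw [Finset.sum_ite_eq' (F.image (c n)) (c n q)
        (fun qn => pr q * typeProb n (ν n) qn),
        if_pos (Finset.mem_image_of_mem (c n) hq)]
    · intro qn hqn
      rw [Set.indicator_apply]
      split
      · rw [hw n qn]
        have hz : ∀ q ∈ F, (if c n q = qn then pr q else 0) = 0 := by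
          intro q hq
          rw [if_neg]
          intro h
          exact hqn (Finset.mem_image.2 ⟨q, hq, h⟩)
        rw [Finset.sum_congr rfl hz, Finset.sum_const_zero, zero_mul]
      · rfl
  -- numerator as a finite sum
  have hNum : ∀ n, 1 ≤ n →
      (∑' q : ↥(Q ∩ Rn X n), priorN c pr n ↑q * typeProb n (ν n) ↑q)
        = ∑ q ∈ F.filter (fun q => c n q ∈ Q), pr q * typeProb n (ν n) (c n q) := by
    intro n hn
    refine Eq.trans (tsum_subtype (Q ∩ Rn X n)
      (fun qn => priorN c pr n qn * typeProb n (ν n) qn)) ?_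
    rw [tsum_eq_sum (s := (F.filter (fun q => c n q ∈ Q)).image (c n)) ?_]
    · have h1 : ∀ qn ∈ (F.filter (fun q => c n q ∈ Q)).image (c n),
          (Q ∩ Rn X n).indicator
            (fun qn => priorN c pr n qn * typeProb n (ν n) qn) qn
            = priorN c pr n qn * typeProb n (ν n) qn := by
        intro qn hqn
        obtain ⟨q, hqF, rfl⟩ := Finset.mem_image.1 hqn
        obtain ⟨hqF', hqQ⟩ := Finset.mem_filter.1 hqF
        exact Set.indicator_of_mem (Set.mem_inter hqQ (hc1 n hn q (hFrat q hqF'))) _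
      rw [Finset.sum_congr rfl h1]
      have h2 : ∀ qn ∈ (F.filter (fun q => c n q ∈ Q)).image (c n),
          priorN c pr n qn * typeProb n (ν n) qn
          = ∑ q ∈ F, if qn = c n q then pr q * typeProb n (ν n) qn else 0 := by
        intro qn _
        rw [hw n qn, Finset.sum_mul]
        refine Finset.sum_congr rfl fun q _ => ?_
        by_cases h : c n q = qn
        · rw [if_pos h, if_pos h.symm]
        · rw [if_neg h, if_neg (fun h' => h h'.symm), zero_mul]
      rw [Finset.sum_congr rfl h2, Finset.sum_comm]
      rw [Finset.sum_filter]
      refine Finset.sum_congr rfl fun q hq => ?_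
      rw [Finset.sum_ite_eq' ((F.filter (fun q => c n q ∈ Q)).image (c n)) (c n q)
        (fun qn => pr q * typeProb n (ν n) qn)]
      by_cases hmem : c n q ∈ Q
      · rw [if_pos, if_pos hmem]
        exact Finset.mem_image_of_mem (c n) (Finset.mem_filter.2 ⟨hq, hmem⟩)
      · rw [if_neg, if_neg hmem]
        intro hin
        obtain ⟨q', hq', heq⟩ := Finset.mem_image.1 hin
        exact hmem (heq ▸ (Finset.mem_filter.1 hq').2)
    · intro qn hqn
      rw [Set.indicator_apply]
      split
      · rename_i hmem
        rw [hw n qn]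
        have hz : ∀ q ∈ F, (if c n q = qn then pr q else 0) = 0 := by
          intro q hq
          rw [if_neg]
          intro h
          exact hqn (Finset.mem_image.2
            ⟨q, Finset.mem_filter.2 ⟨hq, h ▸ hmem.1⟩, h⟩)
        rw [Finset.sum_congr rfl hz, Finset.sum_const_zero, zero_mul]
      · rfl
  -- eventual equality of the Q-filters
  set FQ : Finset (X → ℝ) := F.filter (fun q => q ∈ Q) with hFQdef
  have hmem_ev : ∀ q ∈ F, ∀ᶠ n in atTop, (c n q ∈ Q ↔ q ∈ Q) := by
    intro q hqF
    have hqrat := hFrat q hqF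
    have hg' : Tendsto (fun n => c n q) atTop (𝓝 q) :=
      tendsto_pi_nhds.2 fun x => hcconv q hqrat x
    by_cases hqQ : q ∈ Q
    · have hqpmf : q ∈ pmfSet X := hqrat.1
      have hg : Tendsto (fun n => if h : c n q ∈ pmfSet X then
          (⟨c n q, h⟩ : ↥(pmfSet X)) else ⟨q, hqpmf⟩) atTop (𝓝 ⟨q, hqpmf⟩) := by
        rw [tendsto_subtype_rng]
        refine Filter.Tendsto.congr' ?_ hg'
        filter_upwards [Filter.eventually_ge_atTop 1] with n hn1
        rw [dif_pos (Rn_subset_pmfSet n (hc1 n hn1 q hqrat))]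
      have hevQ := hg.eventually (hQopen.eventually_mem
        (show (⟨q, hqpmf⟩ : ↥(pmfSet X)) ∈ {r : ↥(pmfSet X) | ↑r ∈ Q} from hqQ))
      filter_upwards [hevQ, Filter.eventually_ge_atTop 1] with n hmem hn1
      rw [dif_pos (Rn_subset_pmfSet n (hc1 n hn1 q hqrat))] at hmem
      exact iff_of_true hmem hqQ
    · have hev : ∀ᶠ n in atTop, c n q ∉ Q := by
        by_contra h
        rw [Filter.not_eventually] at h
        simp only [not_not] at h
        have hclos : q ∈ closure Q := by
          rw [mem_closure_iff_nhds]
          intro t ht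
          have htev : ∀ᶠ n in atTop, c n q ∈ t :=
            hg'.eventually (Filter.eventually_of_mem ht (fun y hy => hy))
          obtain ⟨n, hnQ, hnt⟩ := (h.and_eventually htev).exists
          exact ⟨c n q, hnt, hnQ⟩
        have hQmem : q ∈ Q ∩ S := by
          rw [← hclQ]
          exact ⟨hclos, (hmemF q).1 hqF⟩
        exact hqQ hQmem.1
      filter_upwards [hev] with n hn
      exact iff_of_false hn hqQ
  have hfiltereq : ∀ᶠ n in atTop, F.filter (fun q => c n q ∈ Q) = FQ :=
    ((eventually_all_finset F).2 hmem_ev).mono fun n h =>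
      Finset.filter_congr fun q hq => h q hq
  -- full-support witness
  obtain ⟨q0, hq0QS, hq0full⟩ := hfull
  have hq0F : q0 ∈ F := (hmemF q0).2 hq0QS.2
  have hq0FQ : q0 ∈ FQ := Finset.mem_filter.2 ⟨hq0F, hq0QS.1⟩
  have hneS : (F.filter (fun q => ∀ x, 0 < q x)).Nonempty :=
    ⟨q0, Finset.mem_filter.2 ⟨hq0F, hq0full⟩⟩
  have hneQ : (FQ.filter (fun q => ∀ x, 0 < q x)).Nonempty :=
    ⟨q0, Finset.mem_filter.2 ⟨hq0FQ, hq0full⟩⟩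
  -- convergence of the two log-sums
  have hb01F : ∀ n, 1 ≤ n → ∀ q ∈ F, ∀ x, 0 ≤ c n q x ∧ c n q x ≤ 1 := by
    intro n hn q hq x
    have hm := Rn_subset_pmfSet n (hc1 n hn q (hFrat q hq))
    exact ⟨hm.1 x, pmf_coord_le_one hm x⟩
  have hbconvF : ∀ q ∈ F, ∀ x, Tendsto (fun n => c n q x) atTop (𝓝 (q x)) :=
    fun q hq x => hcconv q (hFrat q hq) x
  have hMS := sum_exp_limit p hpfull ν hν0 hνconv pr F hFpos (fun n q => c n q)
    hb01F hbconvF hneS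
  have hMQ := sum_exp_limit p hpfull ν hν0 hνconv pr FQ
    (fun q hq => hFpos q (Finset.mem_filter.1 hq).1) (fun n q => c n q)
    (fun n hn q hq => hb01F n hn q (Finset.mem_filter.1 hq).1)
    (fun q hq => hbconvF q (Finset.mem_filter.1 hq).1) hneQ
  set Λ : (X → ℝ) → ℝ := fun q => ∑ x, p x * Real.log (q x) with hΛ
  set M2 : ℝ := (F.filter (fun q => ∀ x, 0 < q x)).sup' hneS Λ with hM2
  set M1 : ℝ := (FQ.filter (fun q => ∀ x, 0 < q x)).sup' hneQ Λ with hM1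
  -- LSup identities
  have hF0 : ∀ q ∈ F, ∀ x, 0 ≤ q x := fun q hq x => (hFrat q hq).1.1 x
  have hLS : LSup S p = (M2 : EReal) := by
    rw [← hFS]
    exact LSup_finset F p hpfull hF0 hneS
  have hLQ : LSup (Q ∩ S) p = (M1 : EReal) := by
    have hQS' : Q ∩ S = (↑FQ : Set (X → ℝ)) := by
      ext q
      simp only [hFQdef, Finset.coe_filter, Set.mem_setOf_eq, Set.mem_inter_iff,
        hmemF q, and_comm]
    rw [hQS']
    exact LSup_finset FQ p hpfull (fun q hq => hF0 q (Finset.mem_filter.1 hq).1) hneQ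
  -- assemble
  have hfin : Tendsto (fun n : ℕ =>
      ((1/(n:ℝ)) * Real.log (∑ q ∈ FQ, pr q * typeProb n (ν n) (c n q))
        - (1/(n:ℝ)) * Real.log (∑ q ∈ F, pr q * typeProb n (ν n) (c n q)) : ℝ))
      atTop (𝓝 (M1 - M2)) := hMQ.sub hMS
  have hcoe : Tendsto (fun n : ℕ =>
      (((1/(n:ℝ)) * Real.log (∑ q ∈ FQ, pr q * typeProb n (ν n) (c n q))
        - (1/(n:ℝ)) * Real.log (∑ q ∈ F, pr q * typeProb n (ν n) (c n q)) : ℝ) : EReal))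
      atTop (𝓝 ((M1 - M2 : ℝ) : EReal)) := EReal.tendsto_coe.2 hfin
  rw [show LSup (Q ∩ S) p - LSup S p = ((M1 - M2 : ℝ) : EReal) by
    rw [hLQ, hLS, EReal.coe_sub]]
  refine Filter.Tendsto.congr' ?_ hcoe
  have hq0pos : ∀ᶠ n in atTop, ∀ x, 0 < c n q0 x :=
    eventually_all.2 fun x =>
      (hcconv q0 (hFrat q0 hq0F) x).eventually (eventually_gt_nhds (hq0full x))
  filter_upwards [hq0pos, hfiltereq, Filter.eventually_ge_atTop 1] with n hpos hfeq hn1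
  have htp0 : 0 < typeProb n (ν n) (c n q0) :=
    Finset.prod_pos fun x _ => Real.rpow_pos_of_pos (hpos x) _
  have hterm0 : 0 < pr q0 * typeProb n (ν n) (c n q0) :=
    mul_pos (hFpos q0 hq0F) htp0
  have hnonneg : ∀ q ∈ F, 0 ≤ pr q * typeProb n (ν n) (c n q) := by
    intro q hq
    exact mul_nonneg (le_of_lt (hFpos q hq))
      (Finset.prod_nonneg fun x _ => Real.rpow_nonneg ((hb01F n hn1 q hq x).1) _)
  have hDpos : 0 < ∑ q ∈ F, pr q * typeProb n (ν n) (c n q) :=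
    Finset.sum_pos' hnonneg ⟨q0, hq0F, hterm0⟩
  have hNpos : 0 < ∑ q ∈ FQ, pr q * typeProb n (ν n) (c n q) :=
    Finset.sum_pos' (fun q hq => hnonneg q (Finset.mem_filter.1 hq).1)
      ⟨q0, hq0FQ, hterm0⟩
  have hpost : postGen (priorN c pr n) n (ν n) Q
      = (∑ q ∈ FQ, pr q * typeProb n (ν n) (c n q))
        / (∑ q ∈ F, pr q * typeProb n (ν n) (c n q)) := by
    rw [postGen, hNum n hn1, hD n hn1, hfeq]
  have hdivpos : 0 < (∑ q ∈ FQ, pr q * typeProb n (ν n) (c n q))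
      / (∑ q ∈ F, pr q * typeProb n (ν n) (c n q)) := div_pos hNpos hDpos
  rw [hpost, elog, if_neg (not_le.2 hdivpos),
    Real.log_div (ne_of_gt hNpos) (ne_of_gt hDpos), ← EReal.coe_mul]
  rw [EReal.coe_eq_coe_iff]
  ring
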